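/- arXiv:1808.03053 — 4 statements merged into one kernel-verified Lean document; each statement's English description precedes it below -/
import Mathlib

section
/- For any closed Euclidean ball B ⊂ R^n whose set of integer points B ∩ Z^n is nonempty, the set B ∩ Z^n is (n−1)-connected. -/
noncomputable section

/-- Embedding of an integer point into Euclidean `n`-space. -/
def toE (n : ℕ) (p : Fin n → ℤ) : EuclideanSpace ℝ (Fin n) := WithLp.toLp 2 (fun i => (p i : ℝ))

/-- Two integer points are `k`-adjacent iff they are distinct, all coordinates differ
by at most 1, and at most `n - k` coordinates differ. -/
def kAdj (n k : ℕ) (p q : Fin n → ℤ) : Prop :=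
  p ≠ q ∧ (∀ i, |p i - q i| ≤ 1) ∧
    (Finset.univ.filter (fun i => p i ≠ q i)).card ≤ n - k

/-- A set of integer points is `k`-connected iff any two of its points are joined by a
path inside the set whose consecutive points are `k`-adjacent. -/
def kConn (n k : ℕ) (S : Set (Fin n → ℤ)) : Prop :=
  ∀ p ∈ S, ∀ q ∈ S,
    Relation.ReflTransGen (fun a b => a ∈ S ∧ b ∈ S ∧ kAdj n k a b) p q

/-- The closed `r`-offset (closed `r`-neighborhood) of `X`. -/
def offset (n : ℕ) (X : Set (EuclideanSpace ℝ (Fin n))) (r : ℝ) :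
    Set (EuclideanSpace ℝ (Fin n)) := ⋃ x ∈ X, Metric.closedBall x r

/-- The `r`-offset discretization of `X`: the integer points in the `r`-offset. -/
def disc (n : ℕ) (X : Set (EuclideanSpace ℝ (Fin n))) (r : ℝ) :
    Set (Fin n → ℤ) := {p | toE n p ∈ offset n X r}

/-!
Let `c` be the coordinatewise rounding of the centre `x`, a nearest lattice point to it. Moving a
lattice point `p` one unit toward `c` in a single coordinate `j` does not increase `|p j - x j|`,
since `c j` lies within `1/2` of `x j`; so the new point stays in the ball, is face-adjacent to `p`,
and is strictly closer to `c` in the `ℓ¹` distance. Hence every lattice point of the ball is joined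
to `c` inside the ball, and any two of them are joined through `c`.
-/

open Function Finset

lemma natAbs_add_sign_sub_sub_lt {a b : ℤ} (h : a ≠ b) :
    (a + Int.sign (b - a) - b).natAbs < (a - b).natAbs := by
  rcases h.lt_or_gt with h | h
  · rw [Int.sign_eq_one_of_pos (by omega)]; omega
  · rw [Int.sign_eq_neg_one_of_neg (by omega)]; omega

lemma abs_add_sign_round_sub_sub_le (m : ℤ) (t : ℝ) :
    |((m + Int.sign (round t - m) : ℤ) : ℝ) - t| ≤ |(m : ℝ) - t| := by
  have hround := abs_le.1 (abs_sub_round t)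
  rcases lt_trichotomy m (round t) with h | rfl | h
  · have : (m : ℝ) + 1 ≤ round t := by exact_mod_cast h
    rw [Int.sign_eq_one_of_pos (by omega), abs_of_neg (by linarith : (m : ℝ) - t < 0)]
    push_cast
    exact abs_le.2 ⟨by linarith, by linarith⟩
  · simp
  · have : (round t : ℝ) + 1 ≤ m := by exact_mod_cast h
    rw [Int.sign_eq_neg_one_of_neg (by omega), abs_of_pos (by linarith : 0 < (m : ℝ) - t)]
    push_cast
    exact abs_le.2 ⟨by linarith, by linarith⟩

lemma toE_mem_closedBall_of_abs_le {n : ℕ} {x : EuclideanSpace ℝ (Fin n)} {r : ℝ}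
    {p q : Fin n → ℤ} (h : ∀ i, |(p i : ℝ) - x i| ≤ |(q i : ℝ) - x i|)
    (hq : toE n q ∈ Metric.closedBall x r) : toE n p ∈ Metric.closedBall x r := by
  rw [Metric.mem_closedBall, EuclideanSpace.dist_eq] at hq ⊢
  refine le_trans (Real.sqrt_le_sqrt (sum_le_sum fun i _ => ?_)) hq
  simpa only [toE, Real.dist_eq] using pow_le_pow_left₀ (abs_nonneg _) (h i) 2

lemma kAdj_update {n k : ℕ} (hk : k ≤ n - 1) {p : Fin n → ℤ} {j : Fin n} {m : ℤ}
    (hm : |p j - m| = 1) : kAdj n k p (update p j m) := by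
  have hne : m ≠ p j := by rintro rfl; simp at hm
  refine ⟨fun h => hne (by rw [h, update_self]), fun i => ?_, ?_⟩
  · rcases eq_or_ne i j with rfl | hij
    · simp [hm]
    · simp [update_of_ne hij]
  · have hsub : univ.filter (fun i => p i ≠ update p j m i) ⊆ {j} := by
      intro i hi
      by_contra hij
      simp [update_of_ne (mem_singleton.not.1 hij)] at hi
    have hn := j.pos
    exact (card_le_card hsub).trans (by rw [card_singleton]; omega)

def stepToward {n : ℕ} (c p : Fin n → ℤ) (j : Fin n) : Fin n → ℤ :=
  update p j (p j + Int.sign (c j - p j))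

section stepToward

variable {n : ℕ} {c p : Fin n → ℤ} {j : Fin n}

lemma kAdj_stepToward {k : ℕ} (hk : k ≤ n - 1) (hj : p j ≠ c j) :
    kAdj n k p (stepToward c p j) :=
  kAdj_update hk (by simpa using Int.abs_sign_of_ne_zero (sub_ne_zero.2 hj.symm))

lemma sum_natAbs_stepToward_sub_lt (hj : p j ≠ c j) :
    ∑ i, (stepToward c p j i - c i).natAbs < ∑ i, (p i - c i).natAbs := by
  have hlt := natAbs_add_sign_sub_sub_lt hj
  refine sum_lt_sum (fun i _ => ?_) ⟨j, mem_univ j, by simpa [stepToward] using hlt⟩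
  rcases eq_or_ne i j with rfl | hij
  · simpa [stepToward] using hlt.le
  · simp [stepToward, update_of_ne hij]

lemma toE_stepToward_round_mem_closedBall {x : EuclideanSpace ℝ (Fin n)} {r : ℝ}
    (hp : toE n p ∈ Metric.closedBall x r) :
    toE n (stepToward (fun i => round (x i)) p j) ∈ Metric.closedBall x r := by
  refine toE_mem_closedBall_of_abs_le (fun i => ?_) hp
  rcases eq_or_ne i j with rfl | hij
  · simpa [stepToward] using abs_add_sign_round_sub_sub_le (p i) (x i)
  · simp [stepToward, update_of_ne hij]

end stepToward

lemma reflTransGen_of_stepToward_mem {n k : ℕ} (hk : k ≤ n - 1) {S : Set (Fin n → ℤ)}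
    {c : Fin n → ℤ} (hS : ∀ p ∈ S, ∀ j, stepToward c p j ∈ S) :
    ∀ p ∈ S, Relation.ReflTransGen (fun a b => a ∈ S ∧ b ∈ S ∧ kAdj n k a b) p c := by
  intro p hp
  induction hd : ∑ i, (p i - c i).natAbs using Nat.strong_induction_on generalizing p with
  | _ d ih =>
    by_cases hpc : p = c
    · rw [hpc]
    obtain ⟨j, hj⟩ := ne_iff.1 hpc
    exact .head ⟨hp, hS p hp j, kAdj_stepToward hk hj⟩
      (ih _ (hd ▸ sum_natAbs_stepToward_sub_lt hj) _ (hS p hp j) rfl)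

lemma kAdj_symm {n k : ℕ} {p q : Fin n → ℤ} (h : kAdj n k p q) : kAdj n k q p := by
  obtain ⟨hne, habs, hcard⟩ := h
  refine ⟨hne.symm, fun i => abs_sub_comm (p i) (q i) ▸ habs i, ?_⟩
  simpa only [ne_comm] using hcard

lemma kConn_of_stepToward_mem {n k : ℕ} (hk : k ≤ n - 1) {S : Set (Fin n → ℤ)}
    {c : Fin n → ℤ} (hS : ∀ p ∈ S, ∀ j, stepToward c p j ∈ S) : kConn n k S := by
  have : Std.Symm (fun a b => a ∈ S ∧ b ∈ S ∧ kAdj n k a b) :=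
    ⟨fun _ _ ⟨ha, hb, hab⟩ => ⟨hb, ha, kAdj_symm hab⟩⟩
  intro p hp q hq
  exact (reflTransGen_of_stepToward_mem hk hS p hp).trans
    (Std.Symm.symm _ _ (reflTransGen_of_stepToward_mem hk hS q hq))

theorem closedBall_lattice_points_conn_general (n : ℕ) (x : EuclideanSpace ℝ (Fin n)) (r : ℝ) :
    kConn n (n - 1) {p : Fin n → ℤ | toE n p ∈ Metric.closedBall x r} :=
  kConn_of_stepToward_mem le_rfl fun _ hp _ => toE_stepToward_round_mem_closedBall hp

/-- For a closed Euclidean ball `B` in `ℝ^n`, if `B ∩ ℤ^n` is nonempty then it is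
`(n-1)`-connected. -/
theorem closedBall_lattice_points_conn (n : ℕ) (x : EuclideanSpace ℝ (Fin n)) (r : ℝ)
    (hne : {p : Fin n → ℤ | toE n p ∈ Metric.closedBall x r}.Nonempty) :
    kConn n (n - 1) {p : Fin n → ℤ | toE n p ∈ Metric.closedBall x r} :=
  closedBall_lattice_points_conn_general n x r
end
end

section
/- There exists a disconnected set X ⊂ R^2 with connected closure such that the offset discretization Δ_r(X) with r = sqrt(2)/2 is not 1-connected (i.e., the bound r > sqrt(n)/2 in the connectedness theorem is tight for n = 2). -/
noncomputable section

/-!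
The set `X` is the diagonal segment from `(1/4, 1/4)` to `(3/4, 3/4)` with its midpoint removed.
An integer point `p` with `p 0 ≠ p 1` is at squared distance
`((p 0 - p 1)² + (p 0 + p 1 - 2t)²) / 2 ≥ 1/2` from the diagonal point `(t, t)`, with equality
only at the midpoint `t = (p 0 + p 1) / 2`. As no half-integer other than the removed `1/2` lies on
the segment, the discretization at radius `√2/2` consists of diagonal points only; it contains
`(0, 0)` and `(1, 1)`, yet no two diagonal points are `1`-adjacent.
-/

open Set

def diagonalPoint (t : ℝ) : EuclideanSpace ℝ (Fin 2) := WithLp.toLp 2 fun _ => t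

lemma continuous_diagonalPoint : Continuous diagonalPoint := by
  unfold diagonalPoint; fun_prop

lemma image_apply_zero_image_diagonalPoint (S : Set ℝ) :
    (fun x : EuclideanSpace ℝ (Fin 2) => x 0) '' (diagonalPoint '' S) = S :=
  (image_image _ _ _).trans (image_id' S)

lemma Icc_subset_closure_Icc_diff_singleton {a b c : ℝ} (hcb : c < b) :
    Icc a b ⊆ closure (Icc a b \ {c}) := by
  rintro t ht
  rcases eq_or_ne t c with rfl | htc
  · have hsub : Ioc t b ⊆ Icc a b \ {t} := fun s hs =>
      ⟨⟨ht.1.trans hs.1.le, hs.2⟩, hs.1.ne'⟩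
    exact closure_mono hsub (by rw [closure_Ioc hcb.ne]; exact ⟨le_rfl, hcb.le⟩)
  · exact subset_closure ⟨ht, htc⟩

lemma dist_toE_diagonalPoint_le_iff (p : Fin 2 → ℤ) (t : ℝ) :
    dist (toE 2 p) (diagonalPoint t) ≤ √2 / 2 ↔
      ((p 0 : ℝ) - t) ^ 2 + ((p 1 : ℝ) - t) ^ 2 ≤ 1 / 2 := by
  have hr : (√2 / 2) ^ 2 = 1 / 2 := by
    rw [div_pow, Real.sq_sqrt zero_le_two]; norm_num
  rw [← pow_le_pow_iff_left₀ dist_nonneg (by positivity) two_ne_zero, hr,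
    EuclideanSpace.dist_sq_eq, Fin.sum_univ_two]
  simp [toE, diagonalPoint, Real.dist_eq, sq_abs]

lemma mem_disc_image_diagonalPoint_iff (S : Set ℝ) (p : Fin 2 → ℤ) :
    p ∈ disc 2 (diagonalPoint '' S) (√2 / 2) ↔
      ∃ t ∈ S, ((p 0 : ℝ) - t) ^ 2 + ((p 1 : ℝ) - t) ^ 2 ≤ 1 / 2 := by
  simp only [disc, offset, biUnion_image, mem_iUnion, Metric.mem_closedBall,
    dist_toE_diagonalPoint_le_iff, exists_prop]
  exact Iff.rfl

lemma two_mul_eq_add_of_sq_add_sq_le_half {a b : ℤ} (hab : a ≠ b) {t : ℝ}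
    (h : ((a : ℝ) - t) ^ 2 + ((b : ℝ) - t) ^ 2 ≤ 1 / 2) : 2 * t = a + b := by
  have hab' : (1 : ℝ) ≤ ((a : ℝ) - b) ^ 2 :=
    mod_cast (one_le_sq_iff_one_le_abs _).mpr (Int.one_le_abs (sub_ne_zero.mpr hab))
  have hsq : ((a : ℝ) + b - 2 * t) ^ 2 = 0 := by
    nlinarith [sq_nonneg ((a : ℝ) + b - 2 * t)]
  linarith [pow_eq_zero_iff two_ne_zero |>.mp hsq]

lemma disc_image_diagonalPoint_subset {S : Set ℝ} (hS : ∀ t ∈ S, ∀ m : ℤ, 2 * t ≠ m) :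
    disc 2 (diagonalPoint '' S) (√2 / 2) ⊆ {p | p 0 = p 1} := by
  intro p hp
  obtain ⟨t, htS, ht⟩ := (mem_disc_image_diagonalPoint_iff S p).mp hp
  by_contra hne
  exact hS t htS (p 0 + p 1) (by push_cast; exact two_mul_eq_add_of_sq_add_sq_le_half hne ht)

lemma not_kAdj_of_diagonal {p q : Fin 2 → ℤ} (hp : p 0 = p 1) (hq : q 0 = q 1) :
    ¬ kAdj 2 1 p q := by
  rintro ⟨hpq, -, hcard⟩
  have h0 : p 0 ≠ q 0 := fun h0 =>
    hpq (funext fun i => by fin_cases i <;> simp [h0, ← hp, ← hq])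
  have hall : Finset.univ.filter (fun i => p i ≠ q i) = Finset.univ :=
    Finset.filter_true_of_mem fun i _ => by fin_cases i <;> simp [← hp, ← hq, h0]
  simp [hall] at hcard

lemma not_kConn_of_forall_not_kAdj {n k : ℕ} {S : Set (Fin n → ℤ)} {p q : Fin n → ℤ}
    (hp : p ∈ S) (hq : q ∈ S) (hpq : p ≠ q) (hS : ∀ a ∈ S, ∀ b ∈ S, ¬ kAdj n k a b) :
    ¬ kConn n k S := fun hconn =>
  match (hconn p hp q hq).cases_head with
  | .inl h => hpq h
  | .inr ⟨_, ⟨ha, hb, hadj⟩, _⟩ => hS _ ha _ hb hadj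

lemma two_mul_ne_intCast_of_mem_punctured {t : ℝ} (ht : t ∈ Icc (1 / 4 : ℝ) (3 / 4) \ {1 / 2})
    (m : ℤ) : 2 * t ≠ m := by
  obtain ⟨⟨hlo, hhi⟩, hmid⟩ := ht
  intro hm
  have hm1 : m = 1 := by
    have hpos : (0 : ℝ) < m := by linarith
    have hlt : (m : ℝ) < 2 := by linarith
    have : 0 < m := by exact_mod_cast hpos
    have : m < 2 := by exact_mod_cast hlt
    omega
  subst hm1
  exact hmid (mem_singleton_iff.mpr (by push_cast at hm; linarith))

lemma not_isPreconnected_punctured : ¬ IsPreconnected (Icc (1 / 4 : ℝ) (3 / 4) \ {1 / 2}) :=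
  fun h => (h.Icc_subset (a := 1 / 4) (b := 3 / 4) ⟨by norm_num, by norm_num⟩
    ⟨by norm_num, by norm_num⟩ ⟨by norm_num, by norm_num⟩).2 rfl

def puncturedDiagonal : Set (EuclideanSpace ℝ (Fin 2)) :=
  diagonalPoint '' (Icc (1 / 4) (3 / 4) \ {1 / 2})

lemma not_isConnected_puncturedDiagonal : ¬ IsConnected puncturedDiagonal := fun h => by
  apply not_isPreconnected_punctured
  rw [← image_apply_zero_image_diagonalPoint (Icc (1 / 4) (3 / 4) \ {1 / 2})]
  exact h.isPreconnected.image _ (by fun_prop)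

lemma closure_puncturedDiagonal :
    closure puncturedDiagonal = diagonalPoint '' Icc (1 / 4) (3 / 4) :=
  (closure_minimal (image_mono sdiff_subset)
    (isCompact_Icc.image continuous_diagonalPoint).isClosed).antisymm
    ((image_mono (Icc_subset_closure_Icc_diff_singleton (by norm_num))).trans
      (image_closure_subset_closure_image continuous_diagonalPoint))

lemma isConnected_closure_puncturedDiagonal : IsConnected (closure puncturedDiagonal) := by
  rw [closure_puncturedDiagonal]
  exact (isConnected_Icc (by norm_num)).image _ continuous_diagonalPoint.continuousOn

lemma disc_puncturedDiagonal_subset : disc 2 puncturedDiagonal (√2 / 2) ⊆ {p | p 0 = p 1} :=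
  disc_image_diagonalPoint_subset fun _ ht => two_mul_ne_intCast_of_mem_punctured ht

lemma zero_mem_disc_puncturedDiagonal : ![0, 0] ∈ disc 2 puncturedDiagonal (√2 / 2) :=
  (mem_disc_image_diagonalPoint_iff _ _).mpr
    ⟨1 / 4, ⟨⟨le_rfl, by norm_num⟩, by norm_num⟩, by norm_num⟩

lemma one_mem_disc_puncturedDiagonal : ![1, 1] ∈ disc 2 puncturedDiagonal (√2 / 2) :=
  (mem_disc_image_diagonalPoint_iff _ _).mpr
    ⟨3 / 4, ⟨⟨by norm_num, le_rfl⟩, by norm_num⟩, by norm_num⟩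

/-- The bound `r > √n / 2` is tight for `n = 2`: there is a disconnected `X ⊂ ℝ²` with
connected closure whose `(√2 / 2)`-offset discretization is not `1`-connected. -/
theorem tightness_nminus1 :
    ∃ X : Set (EuclideanSpace ℝ (Fin 2)),
      ¬ IsConnected X ∧ IsConnected (closure X) ∧
        ¬ kConn 2 1 (disc 2 X (Real.sqrt 2 / 2)) :=
  ⟨puncturedDiagonal, not_isConnected_puncturedDiagonal, isConnected_closure_puncturedDiagonal,
    not_kConn_of_forall_not_kAdj zero_mem_disc_puncturedDiagonal one_mem_disc_puncturedDiagonal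
      (by decide) fun _ ha _ hb =>
        not_kAdj_of_diagonal (disc_puncturedDiagonal_subset ha)
          (disc_puncturedDiagonal_subset hb)⟩
end
end

section
/- There exists a disconnected set X ⊂ R^2 with connected closure such that the offset discretization Δ_r(X) with r = 1/2 is not 0-connected (i.e., the bound r > sqrt(n−1)/2 in the 0-connectedness theorem is tight for n = 2). -/
noncomputable section

/-! Let `X` be the horizontal segment at height `1/2` over `[0, 2]` with the point over `1`
removed. Its closure is the full segment, but an integer point lies within `1/2` of `(t, 1/2)`
only if it sits directly below or above it, so `Δ_{1/2}(X) = {0, 2} × {0, 1}`. Adjacent points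
differ by at most one in each coordinate, so no path crosses the missing column `x = 1`. -/

section Order

variable {α : Type*} [LinearOrder α] [TopologicalSpace α] [OrderTopology α] {a b c : α}

theorem not_isPreconnected_Icc_diff_singleton (hab : a < b) (hbc : b < c) :
    ¬ IsPreconnected (Set.Icc a c \ {b}) := fun h =>
  (h.Icc_subset (a := a) (b := c) ⟨Set.left_mem_Icc.2 (hab.trans hbc).le, hab.ne⟩
    ⟨Set.right_mem_Icc.2 (hab.trans hbc).le, hbc.ne'⟩ ⟨hab.le, hbc.le⟩).2 rfl

theorem closure_Icc_diff_singleton [DenselyOrdered α] (hab : a < b) (hbc : b < c) :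
    closure (Set.Icc a c \ {b}) = Set.Icc a c := by
  refine (closure_minimal Set.sdiff_subset isClosed_Icc).antisymm ?_
  calc Set.Icc a c = closure (Set.Ico a b) ∪ closure (Set.Ioc b c) := by
        rw [closure_Ico hab.ne, closure_Ioc hbc.ne, Set.Icc_union_Icc_eq_Icc hab.le hbc.le]
    _ ⊆ closure (Set.Icc a c \ {b}) :=
        Set.union_subset
          (closure_mono fun x hx => ⟨⟨hx.1, hx.2.le.trans hbc.le⟩, hx.2.ne⟩)
          (closure_mono fun x hx => ⟨⟨hab.le.trans hx.1.le, hx.2⟩, hx.1.ne'⟩)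

end Order

def horizontalLine (y t : ℝ) : EuclideanSpace ℝ (Fin 2) := !₂[t, y]

theorem isometry_horizontalLine (y : ℝ) : Isometry (horizontalLine y) :=
  Isometry.of_dist_eq fun s t => by
    simp [horizontalLine, EuclideanSpace.dist_eq, Fin.sum_univ_two, Real.sqrt_sq_eq_abs,
      Real.dist_eq]

theorem IsConnected.of_image_horizontalLine {y : ℝ} {T : Set ℝ}
    (h : IsConnected (horizontalLine y '' T)) : IsConnected T := by
  simpa [Set.image_image, horizontalLine] using
    h.image _ (EuclideanSpace.proj (0 : Fin 2)).continuous.continuousOn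

theorem closure_image_horizontalLine (y : ℝ) (T : Set ℝ) :
    closure (horizontalLine y '' T) = horizontalLine y '' closure T :=
  (isometry_horizontalLine y).isClosedEmbedding.closure_image_eq T

theorem dist_toE_horizontalLine_sq (p : Fin 2 → ℤ) (y t : ℝ) :
    dist (toE 2 p) (horizontalLine y t) ^ 2 = ((p 0 : ℝ) - t) ^ 2 + ((p 1 : ℝ) - y) ^ 2 := by
  rw [EuclideanSpace.dist_eq, Real.sq_sqrt (by positivity)]
  simp [toE, horizontalLine, Fin.sum_univ_two, Real.dist_eq, sq_abs]

theorem sq_add_sq_int_sub_half_le_quarter_iff (s : ℝ) (z : ℤ) :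
    s ^ 2 + ((z : ℝ) - 1 / 2) ^ 2 ≤ 1 / 4 ↔ s = 0 ∧ (z = 0 ∨ z = 1) := by
  constructor
  · intro h
    have hz0 : 0 ≤ z := by
      by_contra! hz
      have : (z : ℝ) ≤ -1 := by exact_mod_cast Int.le_sub_one_of_lt hz
      nlinarith
    have hz1 : z ≤ 1 := by
      by_contra! hz
      have : (2 : ℝ) ≤ z := by exact_mod_cast hz
      nlinarith
    have hz' : z = 0 ∨ z = 1 := by omega
    refine ⟨?_, hz'⟩
    rcases hz' with rfl | rfl <;> norm_num at h <;> nlinarith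
  · rintro ⟨rfl, rfl | rfl⟩ <;> norm_num

theorem mem_disc_image_horizontalLine_iff {T : Set ℝ} {p : Fin 2 → ℤ} :
    p ∈ disc 2 (horizontalLine (1 / 2) '' T) (1 / 2) ↔
      (p 0 : ℝ) ∈ T ∧ (p 1 = 0 ∨ p 1 = 1) := by
  simp only [disc, offset, Set.biUnion_image, Set.mem_ofPred_eq, Set.mem_iUnion,
    Metric.mem_closedBall, exists_prop]
  have hdist (t : ℝ) : dist (toE 2 p) (horizontalLine (1 / 2) t) ≤ 1 / 2 ↔
      (p 0 : ℝ) = t ∧ (p 1 = 0 ∨ p 1 = 1) := by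
    rw [← sq_le_sq₀ dist_nonneg (by norm_num), dist_toE_horizontalLine_sq,
      show ((1 : ℝ) / 2) ^ 2 = 1 / 4 by norm_num, sq_add_sq_int_sub_half_le_quarter_iff,
      sub_eq_zero]
  simp only [hdist]
  constructor
  · rintro ⟨t, ht, rfl, h1⟩
    exact ⟨ht, h1⟩
  · rintro ⟨h0, h1⟩
    exact ⟨_, h0, rfl, h1⟩

theorem not_kConn_of_coord_gap {n k : ℕ} {S : Set (Fin n → ℤ)} (i : Fin n) (c : ℤ)
    (hS : ∀ p ∈ S, p i ≠ c) {p q : Fin n → ℤ} (hp : p ∈ S) (hq : q ∈ S)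
    (hpc : p i < c) (hcq : c < q i) : ¬ kConn n k S := by
  intro hconn
  have hbelow (b : Fin n → ℤ)
      (hb : Relation.ReflTransGen (fun a b => a ∈ S ∧ b ∈ S ∧ kAdj n k a b) p b) :
      b i < c := by
    induction hb with
    | refl => exact hpc
    | tail _ hab ih =>
      obtain ⟨-, hb, hadj⟩ := hab
      have := abs_le.mp (hadj.2.1 i)
      have := hS _ hb
      omega
  exact (hbelow q (hconn p hp q hq)).not_gt hcq

/-- The bound `r > √(n-1) / 2` is tight for `n = 2`: there is a disconnected `X ⊂ ℝ²`
with connected closure whose `(1/2)`-offset discretization is not `0`-connected. -/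
theorem tightness_zero :
    ∃ X : Set (EuclideanSpace ℝ (Fin 2)),
      ¬ IsConnected X ∧ IsConnected (closure X) ∧
        ¬ kConn 2 0 (disc 2 X (1 / 2)) := by
  have h01 : (0 : ℝ) < 1 := one_pos
  have h12 : (1 : ℝ) < 2 := one_lt_two
  refine ⟨horizontalLine (1 / 2) '' (Set.Icc 0 2 \ {1}), fun h =>
    not_isPreconnected_Icc_diff_singleton h01 h12 h.of_image_horizontalLine.isPreconnected,
    ?_, ?_⟩
  · rw [closure_image_horizontalLine, closure_Icc_diff_singleton h01 h12]
    exact (isConnected_Icc zero_le_two).image _ (isometry_horizontalLine _).continuous.continuousOn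
  · have hgap (p : Fin 2 → ℤ)
        (hp : p ∈ disc 2 (horizontalLine (1 / 2) '' (Set.Icc 0 2 \ {1})) (1 / 2)) :
        p 0 ≠ 1 := fun h => (mem_disc_image_horizontalLine_iff.1 hp).1.2 (by simp [h])
    exact not_kConn_of_coord_gap (p := ![0, 0]) (q := ![2, 0]) 0 1 hgap
      (mem_disc_image_horizontalLine_iff.2 (by norm_num))
      (mem_disc_image_horizontalLine_iff.2 (by norm_num)) (by simp) (by simp)
end
end

section
/- If X ⊆ R^n (n ≥ 2) is a connected set, then for every r ≥ sqrt(n)/2 the offset discretization Δ_r(X) = U(X,r) ∩ Z^n is (n−1)-connected. -/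
noncomputable section

/-!
Every point `y` of `X` has cell points: integer points `c` with `|c i - y i| ≤ 1/2` for all `i`,
so at distance at most `√n / 2 ≤ r` from `y`. Inside one closed ball `B(x, r)`, `x ∈ X`, any integer
point walks by unit coordinate steps to a cell point of `x` without leaving the ball, since moving
a coordinate towards the cell point never increases its distance to `x`. Nearby points of `X`
share a cell point, so "the cell points of `y` and `w` are joined in `Δ_r(X)`" is an equivalence
relation on `X` with open classes, hence trivial because `X` is connected.
-/

open Function Relation Filter Topology

variable {n k : ℕ}

def kStep (n k : ℕ) (S : Set (Fin n → ℤ)) (a b : Fin n → ℤ) : Prop :=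
  a ∈ S ∧ b ∈ S ∧ kAdj n k a b

def IsCellPoint (c : Fin n → ℤ) (y : EuclideanSpace ℝ (Fin n)) : Prop :=
  ∀ i, |(c i : ℝ) - y i| ≤ 1 / 2

theorem kAdj.symm {p q : Fin n → ℤ} (h : kAdj n k p q) : kAdj n k q p := by
  obtain ⟨hne, hle, hcard⟩ := h
  refine ⟨hne.symm, fun i => abs_sub_comm (q i) (p i) ▸ hle i, ?_⟩
  simpa only [ne_comm] using hcard

instance (S : Set (Fin n → ℤ)) : Std.Symm (kStep n k S) :=
  ⟨fun _ _ ⟨ha, hb, h⟩ => ⟨hb, ha, h.symm⟩⟩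

theorem kAdj_update_s9 {p : Fin n → ℤ} {i : Fin n} {s : ℤ} (hs : |s - p i| = 1) :
    kAdj n (n - 1) p (update p i s) := by
  refine ⟨fun h => ?_, fun j => ?_, ?_⟩
  · have := congrFun h i
    simp only [update_self] at this
    simp [← this] at hs
  · rcases eq_or_ne j i with rfl | hj
    · rw [update_self, abs_sub_comm, hs]
    · simp [update_of_ne hj]
  · have hsub : (Finset.univ.filter fun j => p j ≠ update p i s j) ⊆ {i} := fun j hj => by
      by_contra hji
      simp [update_of_ne (Finset.notMem_singleton.mp hji)] at hj
    have : 1 ≤ n := Nat.one_le_iff_ne_zero.mpr (Fin.pos i).ne'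
    exact (Finset.card_le_card hsub).trans (by rw [Finset.card_singleton]; omega)

theorem abs_add_sign_sub_le {a : ℝ} {m q : ℤ} (hm : |(m : ℝ) - a| ≤ 1 / 2) :
    |((q + Int.sign (m - q) : ℤ) : ℝ) - a| ≤ |(q : ℝ) - a| := by
  rcases lt_trichotomy q m with h | rfl | h
  · have h' : (q : ℝ) + 1 ≤ m := by exact_mod_cast h
    rw [Int.sign_eq_one_of_pos (by omega)]
    push_cast
    rw [abs_le] at hm
    rw [abs_of_nonpos (by linarith : (q : ℝ) - a ≤ 0), abs_le]
    constructor <;> linarith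
  · simp
  · have h' : (m : ℝ) + 1 ≤ q := by exact_mod_cast h
    rw [Int.sign_eq_neg_one_of_neg (by omega)]
    push_cast
    rw [abs_le] at hm
    rw [abs_of_nonneg (by linarith : 0 ≤ (q : ℝ) - a), abs_le]
    constructor <;> linarith

theorem dist_toE_update_le {x : EuclideanSpace ℝ (Fin n)} {q : Fin n → ℤ} {i : Fin n} {s : ℤ}
    (hs : |(s : ℝ) - x i| ≤ |(q i : ℝ) - x i|) :
    dist (toE n (update q i s)) x ≤ dist (toE n q) x := by
  simp only [EuclideanSpace.dist_eq, Real.dist_eq]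
  refine Real.sqrt_le_sqrt (Finset.sum_le_sum fun j _ => pow_le_pow_left₀ (abs_nonneg _) ?_ 2)
  rcases eq_or_ne j i with rfl | hj
  · simpa [toE] using hs
  · simp [toE, update_of_ne hj]

theorem natAbs_add_sign_sub_lt {m q : ℤ} (h : q ≠ m) :
    (q + Int.sign (m - q) - m).natAbs < (q - m).natAbs := by
  rcases lt_or_gt_of_ne h with h | h
  · rw [Int.sign_eq_one_of_pos (sub_pos.mpr h)]; omega
  · rw [Int.sign_eq_neg_one_of_neg (sub_neg.mpr h)]; omega

theorem reflTransGen_kStep_of_dist_le {S : Set (Fin n → ℤ)} {x : EuclideanSpace ℝ (Fin n)}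
    {r : ℝ} (hS : ∀ q, dist (toE n q) x ≤ r → q ∈ S) {m : Fin n → ℤ}
    (hm : IsCellPoint m x) {q : Fin n → ℤ} (hq : dist (toE n q) x ≤ r) :
    ReflTransGen (kStep n (n - 1) S) q m := by
  induction hN : ∑ i, (q i - m i).natAbs using Nat.strong_induction_on generalizing q with
  | _ N ih =>
  obtain rfl | ⟨i, hi⟩ := eq_or_ne q m |>.imp id ne_iff.mp
  · exact .refl
  set q' := update q i (q i + Int.sign (m i - q i))
  have hq' : dist (toE n q') x ≤ r := (dist_toE_update_le (abs_add_sign_sub_le (hm i))).trans hq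
  have hdec : ∑ j, (q' j - m j).natAbs < N := by
    rw [← hN]
    refine Finset.sum_lt_sum (fun j _ => ?_) ⟨i, Finset.mem_univ i, ?_⟩
    · rcases eq_or_ne j i with rfl | hj
      · simpa [q'] using (natAbs_add_sign_sub_lt hi).le
      · simp [q', update_of_ne hj]
    · simpa [q'] using natAbs_add_sign_sub_lt hi
  have hstep : |q i + Int.sign (m i - q i) - q i| = 1 := by
    simpa using Int.abs_sign_of_ne_zero (sub_ne_zero.mpr hi.symm)
  exact .head ⟨hS q hq, hS q' hq', kAdj_update_s9 hstep⟩ (ih _ hdec hq' rfl)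

theorem IsCellPoint.dist_toE_le {c : Fin n → ℤ} {y : EuclideanSpace ℝ (Fin n)}
    (hc : IsCellPoint c y) : dist (toE n c) y ≤ √n / 2 := by
  have h : √n / 2 = √(∑ _i : Fin n, (1 / 2 : ℝ) ^ 2) := by
    rw [Finset.sum_const, Finset.card_univ, Fintype.card_fin, nsmul_eq_mul,
      Real.sqrt_mul (Nat.cast_nonneg n), Real.sqrt_sq (by norm_num)]
    ring
  rw [EuclideanSpace.dist_eq, h]
  exact Real.sqrt_le_sqrt (Finset.sum_le_sum fun i _ => pow_le_pow_left₀ (abs_nonneg _) (hc i) 2)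

/-- `⌈a - 1/2⌉` serves every `b ≤ a` near `a`, and `⌊a + 1/2⌋` every `b ≥ a` near `a`. -/
theorem eventually_exists_int_abs_sub_le_half (a : ℝ) :
    ∀ᶠ b in 𝓝 a, ∃ z : ℤ, |(z : ℝ) - a| ≤ 1 / 2 ∧ |(z : ℝ) - b| ≤ 1 / 2 := by
  set lo := ⌈a - 1 / 2⌉
  set hi := ⌊a + 1 / 2⌋
  have hlo : a - 1 / 2 ≤ lo := Int.le_ceil _
  have hlo' : (lo : ℝ) < a + 1 / 2 := by linarith [Int.ceil_lt_add_one (a - 1 / 2)]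
  have hhi : (hi : ℝ) ≤ a + 1 / 2 := Int.floor_le _
  have hhi' : a - 1 / 2 < hi := by linarith [Int.sub_one_lt_floor (a + 1 / 2)]
  filter_upwards [Ioo_mem_nhds (by linarith : (lo : ℝ) - 1 / 2 < a)
    (by linarith : a < hi + 1 / 2)] with b ⟨hb, hb'⟩
  rcases le_total b a with hba | hab
  · exact ⟨lo, abs_le.mpr ⟨by linarith, by linarith⟩, abs_le.mpr ⟨by linarith, by linarith⟩⟩
  · exact ⟨hi, abs_le.mpr ⟨by linarith, by linarith⟩, abs_le.mpr ⟨by linarith, by linarith⟩⟩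

theorem eventually_exists_isCellPoint (y : EuclideanSpace ℝ (Fin n)) :
    ∀ᶠ w in 𝓝 y, ∃ c : Fin n → ℤ, IsCellPoint c y ∧ IsCellPoint c w := by
  have h : ∀ i, ∀ᶠ w in 𝓝 y, ∃ z : ℤ, |(z : ℝ) - y i| ≤ 1 / 2 ∧ |(z : ℝ) - w i| ≤ 1 / 2 :=
    fun i => (PiLp.continuous_apply 2 _ i).continuousAt.eventually
      (eventually_exists_int_abs_sub_le_half (y i))
  filter_upwards [eventually_all.mpr h] with w hw
  choose c hc using hw
  exact ⟨c, fun i => (hc i).1, fun i => (hc i).2⟩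

theorem mem_disc_of_dist_le {X : Set (EuclideanSpace ℝ (Fin n))} {r : ℝ} {x} (hx : x ∈ X)
    {q : Fin n → ℤ} (hq : dist (toE n q) x ≤ r) : q ∈ disc n X r :=
  Set.mem_biUnion hx (Metric.mem_closedBall.mpr hq)

theorem reflTransGen_kStep_disc {X : Set (EuclideanSpace ℝ (Fin n))} {r : ℝ} {x} (hx : x ∈ X)
    {m : Fin n → ℤ} (hm : IsCellPoint m x) {q : Fin n → ℤ}
    (hq : dist (toE n q) x ≤ r) : ReflTransGen (kStep n (n - 1) (disc n X r)) q m :=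
  reflTransGen_kStep_of_dist_le (fun _ => mem_disc_of_dist_le hx) hm hq

def roundPt (y : EuclideanSpace ℝ (Fin n)) : Fin n → ℤ := fun i => round (y i)

theorem isCellPoint_roundPt (y : EuclideanSpace ℝ (Fin n)) : IsCellPoint (roundPt y) y :=
  fun i => abs_sub_comm (y i) _ ▸ abs_sub_round (y i)

theorem reflTransGen_roundPt_of_isPreconnected {X : Set (EuclideanSpace ℝ (Fin n))}
    (hX : IsPreconnected X) {r : ℝ} (hr : √n / 2 ≤ r) {y w : EuclideanSpace ℝ (Fin n)}
    (hy : y ∈ X) (hw : w ∈ X) :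
    ReflTransGen (kStep n (n - 1) (disc n X r)) (roundPt y) (roundPt w) := by
  refine hX.induction₂
    (fun y w => ReflTransGen (kStep n (n - 1) (disc n X r)) (roundPt y) (roundPt w))
    (fun y hy => ?_) (fun _ _ _ _ _ _ => .trans) (fun _ _ _ _ => symm) hy hw
  filter_upwards [nhdsWithin_le_nhds (eventually_exists_isCellPoint y), self_mem_nhdsWithin]
    with w ⟨c, hcy, hcw⟩ hw
  exact (reflTransGen_kStep_disc hy hcy ((isCellPoint_roundPt y).dist_toE_le.trans hr)).trans
    (reflTransGen_kStep_disc hw (isCellPoint_roundPt w) (hcw.dist_toE_le.trans hr))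

theorem disc_conn_of_connected_general (n : ℕ)
    (X : Set (EuclideanSpace ℝ (Fin n))) (hX : IsConnected X)
    (r : ℝ) (hr : Real.sqrt n / 2 ≤ r) :
    kConn n (n - 1) (disc n X r) := by
  rintro p hp q hq
  obtain ⟨x, hx, hpx⟩ := Set.mem_iUnion₂.mp hp
  obtain ⟨y, hy, hqy⟩ := Set.mem_iUnion₂.mp hq
  rw [Metric.mem_closedBall] at hpx hqy
  exact (reflTransGen_kStep_disc hx (isCellPoint_roundPt x) hpx).trans <|
    (reflTransGen_roundPt_of_isPreconnected hX.isPreconnected hr hx hy).trans <|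
      symm (reflTransGen_kStep_disc hy (isCellPoint_roundPt y) hqy)

/-- If `X ⊆ ℝ^n` (`n ≥ 2`) is connected, then for every `r ≥ √n / 2` the `r`-offset
discretization of `X` is `(n-1)`-connected. -/
theorem disc_conn_of_connected (n : ℕ) (hn : 2 ≤ n)
    (X : Set (EuclideanSpace ℝ (Fin n))) (hX : IsConnected X)
    (r : ℝ) (hr : Real.sqrt n / 2 ≤ r) :
    kConn n (n - 1) (disc n X r) :=
  disc_conn_of_connected_general n X hX r hr
end
end
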